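/- (Corollary 1) In the setup below, assume f is weakly homogeneous of degree d ∈ (0,1] and tolerance η ≥ 1 over [0,1], and assume Δ·k < 1. Take c ∈ (Δ·k, 1), ε = c/k and a = (ε·(ε−Δ))^{1/d}. Then, with ψ(c,δ) := e^{−c/(1−c)}·(1−δ), for every S ⊆ {1,…,n} with |S| ≤ k: (1/2)·ψ(c, Δ·k/c)·v(S) ≤ u(S) ≤ 2η·(1+c)/ψ(c, Δ·k/c) · v(S). -/

import Mathlib

/-!
Split `X_S` at the thresholds into the bulk `A = 𝔼 f((X 1{X ≤ τ})_S)` and the tail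
`T = ∑_{i ∈ S} 𝔼[f(X_i e_i); X_i > τ_i]`. Subadditivity gives `u(S) ≤ A + T` and monotonicity
`A ≤ u(S)`. On the event that `i` is the only coordinate of `S` above its threshold,
`f(X_S) ≥ f(X_i e_i)`, and by independence this event keeps a factor
`∏_{j ≠ i} ℙ(X_j ≤ τ_j) ≥ (1 - ε)^(k-1)` of the `i`-th tail term, so `(1 - ε)^(k-1) T ≤ u(S)`.

`X̂` replaces each tail value by the constant `c_i` with `f(c_i e_i) = H_i`, which leaves the tail
term unchanged, so the same arguments give `v(S) ≤ 𝔼 f(X̂_S) ≤ A + T` and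
`(1 - ε)^(k-1) T ≤ 𝔼 f(X̃_S)`. Cutting `X̂` below `a τ` costs at most `a^d f(τ_S) ≤ ε T` by weak
homogeneity, since `f(τ_i e_i) ≤ H_i ≤ T_i / (ε - Δ)`; so `A ≤ 𝔼 f(X̃_S) + ε T`, and weak
homogeneity also gives `(1 - ε)/η · 𝔼 f(X̃_S) ≤ v(S)`. Finally `(1 - c/k)^k ≥ e^{-c/(1-c)}` turns
the powers of `1 - ε` into `ψ(c, Δk/c)`.
-/

open MeasureTheory ProbabilityTheory

def mask {n : ℕ} (S : Finset (Fin n)) (x : Fin n → ℝ) : Fin n → ℝ :=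
  fun i => if i ∈ S then x i else 0

open Set

section Mask

variable {n : ℕ}

theorem mask_nonneg (S : Finset (Fin n)) {x : Fin n → ℝ} (hx : 0 ≤ x) : 0 ≤ mask S x := by
  intro i
  unfold mask
  split_ifs
  exacts [hx i, le_rfl]

theorem mask_mono (S : Finset (Fin n)) {x y : Fin n → ℝ} (h : x ≤ y) :
    mask S x ≤ mask S y := by
  intro i
  unfold mask
  split_ifs
  exacts [h i, le_rfl]

theorem mask_empty (x : Fin n → ℝ) : mask ∅ x = 0 := by
  ext i
  simp [mask]

theorem mask_insert {i : Fin n} {S : Finset (Fin n)} (hi : i ∉ S) (x : Fin n → ℝ) :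
    mask (insert i S) x = Pi.single i (x i) + mask S x := by
  ext j
  by_cases hj : j = i
  · subst hj
    simp [mask, hi]
  · simp [mask, hj]

theorem mask_ite (S : Finset (Fin n)) (p : Fin n → Prop) [DecidablePred p] (y z : Fin n → ℝ) :
    (mask S fun i => if p i then z i else y i)
      = (mask S fun i => if p i then 0 else y i) + mask (S.filter p) z := by
  ext i
  by_cases hi : i ∈ S <;> by_cases hp : p i <;> simp [mask, hi, hp]

theorem single_le_mask {S : Finset (Fin n)} {i : Fin n} (hi : i ∈ S) {x : Fin n → ℝ}
    (hx : 0 ≤ x) : Pi.single i (x i) ≤ mask S x := by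
  intro j
  by_cases hj : j = i
  · subst hj
    simp [mask, hi]
  · simpa [hj] using mask_nonneg S hx j

theorem measurable_mask (S : Finset (Fin n)) : Measurable (mask S) :=
  measurable_pi_lambda _ fun i => by
    unfold mask
    split_ifs
    exacts [measurable_pi_apply i, measurable_const]

end Mask

section Subadditive

variable {n : ℕ} {f : (Fin n → ℝ) → ℝ}

theorem apply_mask_le_sum_single (hf0 : f 0 = 0)
    (hf_subadd : ∀ x y : Fin n → ℝ, 0 ≤ x → 0 ≤ y → f (x + y) ≤ f x + f y)
    {x : Fin n → ℝ} (hx : 0 ≤ x) (S : Finset (Fin n)) :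
    f (mask S x) ≤ ∑ i ∈ S, f (Pi.single i (x i)) := by
  induction S using Finset.induction_on with
  | empty => rw [mask_empty, hf0, Finset.sum_empty]
  | insert i S hi ih =>
    rw [mask_insert hi, Finset.sum_insert hi]
    have hsingle : (0 : Fin n → ℝ) ≤ Pi.single i (x i) := Pi.single_nonneg.2 (hx i)
    linarith [hf_subadd _ _ hsingle (mask_nonneg S hx)]

theorem apply_mask_ite_le (hf0 : f 0 = 0)
    (hf_subadd : ∀ x y : Fin n → ℝ, 0 ≤ x → 0 ≤ y → f (x + y) ≤ f x + f y)
    (S : Finset (Fin n)) (p : Fin n → Prop) [DecidablePred p] {y z : Fin n → ℝ} (hy : 0 ≤ y)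
    (hz : 0 ≤ z) :
    f (mask S fun i => if p i then z i else y i)
      ≤ f (mask S fun i => if p i then 0 else y i)
        + ∑ i ∈ S, if p i then f (Pi.single i (z i)) else 0 := by
  have hy' : 0 ≤ fun i => if p i then 0 else y i := fun i => by
    dsimp only
    split_ifs
    exacts [le_rfl, hy i]
  rw [mask_ite, ← Finset.sum_filter]
  linarith [hf_subadd _ _ (mask_nonneg S hy') (mask_nonneg (S.filter p) hz),
    apply_mask_le_sum_single hf0 hf_subadd hz (S.filter p)]

theorem apply_le_add_rpow_mul (hf_mono : ∀ x y : Fin n → ℝ, 0 ≤ x → x ≤ y → f x ≤ f y)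
    (hf_subadd : ∀ x y : Fin n → ℝ, 0 ≤ x → 0 ≤ y → f (x + y) ≤ f x + f y) {d : ℝ}
    (hf_hom : ∀ (x : Fin n → ℝ) (θ : ℝ), 0 ≤ x → θ ∈ Icc (0 : ℝ) 1 → f (θ • x) ≤ θ ^ d * f x)
    {x y t : Fin n → ℝ} {a : ℝ} (hx : 0 ≤ x) (hy : 0 ≤ y) (ht : 0 ≤ t) (ha : a ∈ Icc (0 : ℝ) 1)
    (hxyt : x ≤ y + a • t) :
    f x ≤ f y + a ^ d * f t :=
  calc f x ≤ f (y + a • t) := hf_mono _ _ hx hxyt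
    _ ≤ f y + f (a • t) := hf_subadd _ _ hy (smul_nonneg ha.1 ht)
    _ ≤ f y + a ^ d * f t := add_le_add_right (hf_hom t a ht ha) _

end Subadditive

theorem sum_indicator_isolated_le {α ι : Type*} [DecidableEq ι] (S : Finset ι) (E : ι → Set α)
    (w : ι → α → ℝ) {M : ℝ} {x : α} (hM : 0 ≤ M) (hw : ∀ i ∈ S, x ∈ E i → w i x ≤ M) :
    ∑ i ∈ S, (⋂ j ∈ S.erase i, (E j)ᶜ).indicator ((E i).indicator (w i)) x ≤ M := by
  by_cases hx : ∃ i ∈ S, x ∈ E i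
  · obtain ⟨i, hi, hxi⟩ := hx
    -- `x ∈ E i` keeps every other index from being isolated
    rw [Finset.sum_eq_single_of_mem i hi fun j _ hji => indicator_of_notMem
      (fun h => (mem_iInter₂.1 h i (Finset.mem_erase.2 ⟨hji.symm, hi⟩) : x ∈ (E i)ᶜ) hxi) _]
    exact indicator_apply_le' (fun _ => indicator_apply_le' (hw i hi) fun _ => hM) fun _ => hM
  · push Not at hx
    rw [Finset.sum_eq_zero fun i hi =>
      indicator_apply_eq_zero.2 fun _ => indicator_of_notMem (hx i hi) _]
    exact hM

theorem pow_mul_sum_le_sum_mul_prod {ι : Type*} [DecidableEq ι] {S : Finset ι} {k : ℕ}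
    (hS : S.card ≤ k) {r : ℝ} (hr0 : 0 ≤ r) (hr1 : r ≤ 1) {t p : ι → ℝ}
    (ht : ∀ i ∈ S, 0 ≤ t i) (hp : ∀ j ∈ S, r ≤ p j) :
    r ^ (k - 1) * ∑ i ∈ S, t i ≤ ∑ i ∈ S, t i * ∏ j ∈ S.erase i, p j := by
  rw [Finset.mul_sum]
  refine Finset.sum_le_sum fun i hi => ?_
  have hcard : (S.erase i).card ≤ k - 1 := by rw [Finset.card_erase_of_mem hi]; omega
  calc r ^ (k - 1) * t i ≤ r ^ (S.erase i).card * t i :=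
        mul_le_mul_of_nonneg_right (pow_le_pow_of_le_one hr0 hr1 hcard) (ht i hi)
    _ = t i * ∏ j ∈ S.erase i, r := by rw [Finset.prod_const, mul_comm]
    _ ≤ t i * ∏ j ∈ S.erase i, p j :=
        mul_le_mul_of_nonneg_left (Finset.prod_le_prod (fun _ _ => hr0)
          fun j hj => hp j (Finset.mem_of_mem_erase hj)) (ht i hi)

section Independence

variable {Ω ι : Type*} [MeasurableSpace Ω] {μ : Measure Ω}

theorem integral_indicator_biInter_preimage {β : Type*} [MeasurableSpace β] {X : ι → Ω → β}
    (hX : ∀ i, Measurable (X i)) (hind : iIndepFun X μ) {i : ι} {s : Finset ι} (hi : i ∉ s)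
    {B : ι → Set β} (hB : ∀ j, MeasurableSet (B j)) {g : β → ℝ} (hg : Measurable g) :
    ∫ ω, (⋂ j ∈ s, X j ⁻¹' B j).indicator (fun ω => g (X i ω)) ω ∂μ
      = (∫ ω, g (X i ω) ∂μ) * ∏ j ∈ s, μ.real (X j ⁻¹' B j) := by
  classical
  set E := ⋂ j ∈ s, X j ⁻¹' B j
  have hE : MeasurableSet E := Finset.measurableSet_biInter s fun j _ => hX j (hB j)
  have hpre : (fun ω (j : s) => X j ω) ⁻¹' univ.pi (fun j : s => B j) = E := by
    ext ω
    simp [E]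
  have hindep : IndepFun (fun ω => g (X i ω)) (E.indicator (1 : Ω → ℝ)) μ := by
    rw [← hpre]
    exact (hind.indepFun_finset {i} s (Finset.disjoint_singleton_left.2 hi) hX).comp
      (hg.comp (measurable_pi_apply ⟨i, Finset.mem_singleton_self i⟩))
      ((measurable_one.indicator (MeasurableSet.univ_pi fun j : s => hB j) :
        Measurable ((univ.pi fun j : s => B j).indicator (1 : (s → β) → ℝ))))
  calc ∫ ω, E.indicator (fun ω => g (X i ω)) ω ∂μ
      = ∫ ω, g (X i ω) * E.indicator (1 : Ω → ℝ) ω ∂μ := by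
        congr 1
        ext ω
        by_cases h : ω ∈ E <;> simp [h]
    _ = (∫ ω, g (X i ω) ∂μ) * μ.real E := by
        rw [hindep.integral_fun_mul_eq_mul_integral (hg.comp (hX i)).aestronglyMeasurable
          (measurable_one.indicator hE).aestronglyMeasurable, integral_indicator_one hE]
    _ = _ := by
        rw [measureReal_def, hind.meas_biInter fun j _ => ⟨B j, hB j, rfl⟩, ENNReal.toReal_prod]
        rfl

theorem pow_mul_sum_setIntegral_le_integral [DecidableEq ι] {X : ι → Ω → ℝ}
    (hX : ∀ i, Measurable (X i)) (hind : iIndepFun X μ) (τ : ι → ℝ) {S : Finset ι} {k : ℕ}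
    (hS : S.card ≤ k) {r : ℝ} (hr0 : 0 ≤ r) (hr1 : r ≤ 1)
    (hp : ∀ j ∈ S, r ≤ μ.real {ω | X j ω ≤ τ j}) {g : ι → ℝ → ℝ} (hg : ∀ i, Measurable (g i))
    (hg0 : ∀ i ∈ S, ∀ ω, τ i < X i ω → 0 ≤ g i (X i ω))
    (hg_int : ∀ i ∈ S, IntegrableOn (fun ω => g i (X i ω)) {ω | τ i < X i ω} μ)
    {F : Ω → ℝ} (hF : Integrable F μ) (hF0 : 0 ≤ F)
    (hgF : ∀ i ∈ S, ∀ ω, τ i < X i ω → g i (X i ω) ≤ F ω) :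
    r ^ (k - 1) * ∑ i ∈ S, ∫ ω in {ω | τ i < X i ω}, g i (X i ω) ∂μ ≤ ∫ ω, F ω ∂μ := by
  set E : ι → Set Ω := fun i => X i ⁻¹' Ioi (τ i)
  set term : ι → Ω → ℝ := fun i =>
    (⋂ j ∈ S.erase i, (E j)ᶜ).indicator ((E i).indicator fun ω => g i (X i ω))
  have hE : ∀ i, MeasurableSet (E i) := fun i => hX i measurableSet_Ioi
  have hterm_int : ∀ i ∈ S, Integrable (term i) μ := fun i hi =>
    ((integrable_indicator_iff (hE i)).2 (hg_int i hi)).indicator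
      (Finset.measurableSet_biInter _ fun j _ => (hE j).compl)
  have hterm : ∀ i, ∫ ω, term i ω ∂μ = (∫ ω in {ω | τ i < X i ω}, g i (X i ω) ∂μ)
      * ∏ j ∈ S.erase i, μ.real {ω | X j ω ≤ τ j} := by
    intro i
    have h := integral_indicator_biInter_preimage hX hind (Finset.notMem_erase i S)
      (B := fun j => (Ioi (τ j))ᶜ) (fun j => measurableSet_Ioi.compl)
      ((hg i).indicator (measurableSet_Ioi (a := τ i)))
    have hlow : ∀ j, X j ⁻¹' (Ioi (τ j))ᶜ = {ω | X j ω ≤ τ j} := fun j => by ext; simp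
    simp only [← indicator_comp_right, integral_indicator (hX i measurableSet_Ioi)] at h
    refine h.trans ?_
    simp only [hlow]
    rfl
  calc _ ≤ ∑ i ∈ S, (∫ ω in {ω | τ i < X i ω}, g i (X i ω) ∂μ)
          * ∏ j ∈ S.erase i, μ.real {ω | X j ω ≤ τ j} :=
        pow_mul_sum_le_sum_mul_prod hS hr0 hr1 (fun i hi => setIntegral_nonneg
          (measurableSet_lt measurable_const (hX i)) fun ω hω => hg0 i hi ω hω) hp
    _ = ∑ i ∈ S, ∫ ω, term i ω ∂μ := Finset.sum_congr rfl fun i _ => (hterm i).symm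
    _ = ∫ ω, ∑ i ∈ S, term i ω ∂μ := (integral_finsetSum S hterm_int).symm
    _ ≤ ∫ ω, F ω ∂μ := integral_mono (integrable_finsetSum S hterm_int) hF fun ω =>
        sum_indicator_isolated_le S E _ (hF0 ω) fun i hi hω => hgF i hi ω hω

end Independence

section SetIntegral

variable {Ω : Type*} [MeasurableSpace Ω] {μ : Measure Ω} {s : Set Ω}

theorem le_setIntegral_div_measureReal [IsFiniteMeasure μ] (hs : MeasurableSet s)
    (hμs : 0 < μ.real s) {g : Ω → ℝ} (hg : IntegrableOn g s μ) {c : ℝ}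
    (hc : ∀ ω ∈ s, c ≤ g ω) :
    c ≤ (∫ ω in s, g ω ∂μ) / μ.real s := by
  rw [le_div_iff₀ hμs, mul_comm, ← smul_eq_mul, ← setIntegral_const]
  exact setIntegral_mono_on (integrableOn_const (measure_ne_top μ s)) hg hs hc

theorem setIntegral_div_measureReal (hs : μ.real s ≠ 0) (g : Ω → ℝ) :
    ∫ _ in s, (∫ ω in s, g ω ∂μ) / μ.real s ∂μ = ∫ ω in s, g ω ∂μ := by
  rw [setIntegral_const, smul_eq_mul, mul_div_cancel₀ _ hs]

theorem le_measureReal_lt_of_measureReal_le [IsProbabilityMeasure μ] {X : Ω → ℝ}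
    (hX : Measurable X) {t δ : ℝ} (h : μ.real {ω | X ω ≤ t} ≤ 1 - δ) :
    δ ≤ μ.real {ω | t < X ω} := by
  have hcompl := probReal_compl_eq_one_sub (μ := μ)
    (measurableSet_lt (measurable_const (a := t)) hX)
  simp only [compl_ofPred, not_lt] at hcompl
  linarith

end SetIntegral

theorem cutoff_bounds {x τ c a xhat xtil : ℝ} (hx : 0 ≤ x) (hτ : 0 ≤ τ) (hc : τ < c)
    (ha : a ∈ Icc (0 : ℝ) 1) (hxhat : xhat = if x ≤ τ then x else c)
    (hxtil : xtil = if a * τ < xhat then xhat else 0) :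
    0 ≤ xtil ∧ xtil ≤ (if τ < x then c else x) ∧ (if τ < x then 0 else x) ≤ xtil + a * τ
      ∧ (τ < x → xtil = c) := by
  have haτ : a * τ ≤ τ := mul_le_of_le_one_left hτ ha.2
  subst hxhat hxtil
  refine ⟨?_, ?_, ?_, fun h => ?_⟩ <;> split_ifs <;> nlinarith [ha.1]

theorem measurable_cutoff {Ω : Type*} [MeasurableSpace Ω] {x xhat xtil : Ω → ℝ} {τ c b : ℝ}
    (hx : Measurable x) (hxhat : ∀ ω, xhat ω = if x ω ≤ τ then x ω else c)
    (hxtil : ∀ ω, xtil ω = if b < xhat ω then xhat ω else 0) :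
    Measurable xtil := by
  have hxhat_meas : Measurable xhat := by
    rw [funext hxhat]
    exact Measurable.ite (measurableSet_le hx measurable_const) hx measurable_const
  rw [funext hxtil]
  exact Measurable.ite (measurableSet_lt measurable_const hxhat_meas) hxhat_meas measurable_const

theorem apply_mask_le_add_sum_indicator {Ω : Type*} {n : ℕ} {f : (Fin n → ℝ) → ℝ}
    (hf0 : f 0 = 0) (hf_mono : ∀ x y : Fin n → ℝ, 0 ≤ x → x ≤ y → f x ≤ f y)
    (hf_subadd : ∀ x y : Fin n → ℝ, 0 ≤ x → 0 ≤ y → f (x + y) ≤ f x + f y)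
    {X W Z : Fin n → Ω → ℝ} (hX0 : ∀ i ω, 0 ≤ X i ω) (hW0 : ∀ i ω, 0 ≤ W i ω)
    (hZ0 : ∀ i ω, 0 ≤ Z i ω) {τ : Fin n → ℝ}
    (hZ : ∀ i ω, Z i ω ≤ if τ i < X i ω then W i ω else X i ω) (S : Finset (Fin n)) (ω : Ω) :
    f (mask S fun i => Z i ω)
      ≤ f (mask S fun i => if τ i < X i ω then 0 else X i ω)
        + ∑ i ∈ S, {ω | τ i < X i ω}.indicator (fun ω => f (Pi.single i (W i ω))) ω := by
  simp only [indicator_apply, mem_ofPred_eq]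
  exact (hf_mono _ _ (mask_nonneg S (hZ0 · ω)) (mask_mono S (hZ · ω))).trans
    (apply_mask_ite_le hf0 hf_subadd S _ (hX0 · ω) (hW0 · ω))

section Truncation

variable {Ω : Type*} [MeasurableSpace Ω] {μ : Measure Ω} {n : ℕ} {f : (Fin n → ℝ) → ℝ}

noncomputable def bulkPart (μ : Measure Ω) (f : (Fin n → ℝ) → ℝ) (X : Fin n → Ω → ℝ)
    (τ : Fin n → ℝ) (S : Finset (Fin n)) : ℝ :=
  ∫ ω, f (mask S fun i => if τ i < X i ω then 0 else X i ω) ∂μ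

noncomputable def tailPart (μ : Measure Ω) (f : (Fin n → ℝ) → ℝ) (X : Fin n → Ω → ℝ)
    (τ : Fin n → ℝ) (S : Finset (Fin n)) : ℝ :=
  ∑ i ∈ S, ∫ ω in {ω | τ i < X i ω}, f (Pi.single i (X i ω)) ∂μ

theorem bulkPart_nonneg (hf_nonneg : ∀ x : Fin n → ℝ, 0 ≤ x → 0 ≤ f x) {X : Fin n → Ω → ℝ}
    (hX0 : ∀ i ω, 0 ≤ X i ω) (τ : Fin n → ℝ) (S : Finset (Fin n)) :
    0 ≤ bulkPart μ f X τ S :=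
  integral_nonneg fun ω => hf_nonneg _ (mask_nonneg S fun i => by
    dsimp only
    split_ifs
    exacts [le_rfl, hX0 i ω])

theorem tailPart_nonneg (hf_nonneg : ∀ x : Fin n → ℝ, 0 ≤ x → 0 ≤ f x) {X : Fin n → Ω → ℝ}
    (hX : ∀ i, Measurable (X i)) (hX0 : ∀ i ω, 0 ≤ X i ω) (τ : Fin n → ℝ)
    (S : Finset (Fin n)) :
    0 ≤ tailPart μ f X τ S :=
  Finset.sum_nonneg fun i _ => setIntegral_nonneg (measurableSet_lt measurable_const (hX i))
    fun ω _ => hf_nonneg _ (Pi.single_nonneg.2 (hX0 i ω))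

theorem sum_setIntegral_eq_tailPart {X : Fin n → Ω → ℝ} {τ : Fin n → ℝ} {S : Finset (Fin n)}
    (hq : ∀ i ∈ S, μ.real {ω | τ i < X i ω} ≠ 0) {cst : Fin n → ℝ}
    (hcst : ∀ i ∈ S, f (Pi.single i (cst i))
      = (∫ ω in {ω | τ i < X i ω}, f (Pi.single i (X i ω)) ∂μ) / μ.real {ω | τ i < X i ω}) :
    ∑ i ∈ S, ∫ _ in {ω | τ i < X i ω}, f (Pi.single i (cst i)) ∂μ = tailPart μ f X τ S :=
  Finset.sum_congr rfl fun i hi => by rw [hcst i hi, setIntegral_div_measureReal (hq i hi)]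

theorem apply_mask_le_tailPart_div [IsFiniteMeasure μ] (hf0 : f 0 = 0)
    (hf_nonneg : ∀ x : Fin n → ℝ, 0 ≤ x → 0 ≤ f x)
    (hf_mono : ∀ x y : Fin n → ℝ, 0 ≤ x → x ≤ y → f x ≤ f y)
    (hf_subadd : ∀ x y : Fin n → ℝ, 0 ≤ x → 0 ≤ y → f (x + y) ≤ f x + f y)
    {X : Fin n → Ω → ℝ} (hX : ∀ i, Measurable (X i)) (hX0 : ∀ i ω, 0 ≤ X i ω)
    (hint : ∀ i, Integrable (fun ω => f (Pi.single i (X i ω))) μ) {τ : Fin n → ℝ} (hτ : 0 ≤ τ)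
    {r : ℝ} (hr : 0 < r) (hq : ∀ i, r ≤ μ.real {ω | τ i < X i ω}) (S : Finset (Fin n)) :
    f (mask S τ) ≤ tailPart μ f X τ S / r := by
  have hE : ∀ i, MeasurableSet {ω | τ i < X i ω} :=
    fun i => measurableSet_lt measurable_const (hX i)
  rw [tailPart, Finset.sum_div]
  calc f (mask S τ) ≤ ∑ i ∈ S, f (Pi.single i (τ i)) :=
        apply_mask_le_sum_single hf0 hf_subadd hτ S
    _ ≤ ∑ i ∈ S, (∫ ω in {ω | τ i < X i ω}, f (Pi.single i (X i ω)) ∂μ)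
          / μ.real {ω | τ i < X i ω} :=
        Finset.sum_le_sum fun i _ => le_setIntegral_div_measureReal (hE i) (hr.trans_le (hq i))
          (hint i).integrableOn fun ω hω =>
            hf_mono _ _ (Pi.single_nonneg.2 (hτ i)) (Pi.single_mono i hω.le)
    _ ≤ _ := Finset.sum_le_sum fun i _ => div_le_div_of_nonneg_left (setIntegral_nonneg (hE i)
          fun ω _ => hf_nonneg _ (Pi.single_nonneg.2 (hX0 i ω))) hr (hq i)

theorem integrable_apply_mask_of_le (hf_meas : Measurable f)
    (hf_nonneg : ∀ x : Fin n → ℝ, 0 ≤ x → 0 ≤ f x)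
    (hf_mono : ∀ x y : Fin n → ℝ, 0 ≤ x → x ≤ y → f x ≤ f y) (S : Finset (Fin n))
    {Z₁ Z₂ : Fin n → Ω → ℝ} (hZ₁ : ∀ i, Measurable (Z₁ i)) (h0 : ∀ i ω, 0 ≤ Z₁ i ω)
    (hle : ∀ i ω, Z₁ i ω ≤ Z₂ i ω) (hint : Integrable (fun ω => f (mask S fun i => Z₂ i ω)) μ) :
    Integrable (fun ω => f (mask S fun i => Z₁ i ω)) μ :=
  integrable_of_le_of_le
    (hf_meas.comp ((measurable_mask S).comp (measurable_pi_lambda _ hZ₁))).aestronglyMeasurable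
    (ae_of_all _ fun ω => hf_nonneg _ (mask_nonneg S (h0 · ω)))
    (ae_of_all _ fun ω => hf_mono _ _ (mask_nonneg S (h0 · ω)) (mask_mono S (hle · ω)))
    (integrable_zero _ _ _) hint

theorem integrable_bulkPart_integrand (hf_meas : Measurable f)
    (hf_nonneg : ∀ x : Fin n → ℝ, 0 ≤ x → 0 ≤ f x)
    (hf_mono : ∀ x y : Fin n → ℝ, 0 ≤ x → x ≤ y → f x ≤ f y) {X : Fin n → Ω → ℝ}
    (hX : ∀ i, Measurable (X i)) (hX0 : ∀ i ω, 0 ≤ X i ω) (τ : Fin n → ℝ) (S : Finset (Fin n))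
    (hu : Integrable (fun ω => f (mask S fun i => X i ω)) μ) :
    Integrable (fun ω => f (mask S fun i => if τ i < X i ω then 0 else X i ω)) μ :=
  integrable_apply_mask_of_le hf_meas hf_nonneg hf_mono S
    (fun i => Measurable.ite (measurableSet_lt measurable_const (hX i)) measurable_const (hX i))
    (fun i ω => by split_ifs; exacts [le_rfl, hX0 i ω])
    (fun i ω => by split_ifs; exacts [hX0 i ω, le_rfl]) hu

theorem integrable_apply_mask_of_le_ite (hf_meas : Measurable f) (hf0 : f 0 = 0)
    (hf_nonneg : ∀ x : Fin n → ℝ, 0 ≤ x → 0 ≤ f x)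
    (hf_mono : ∀ x y : Fin n → ℝ, 0 ≤ x → x ≤ y → f x ≤ f y)
    (hf_subadd : ∀ x y : Fin n → ℝ, 0 ≤ x → 0 ≤ y → f (x + y) ≤ f x + f y)
    {X W Z : Fin n → Ω → ℝ} (hX : ∀ i, Measurable (X i)) (hX0 : ∀ i ω, 0 ≤ X i ω)
    (hW0 : ∀ i ω, 0 ≤ W i ω) (hZ_meas : ∀ i, Measurable (Z i)) (hZ0 : ∀ i ω, 0 ≤ Z i ω)
    {τ : Fin n → ℝ} (hZ : ∀ i ω, Z i ω ≤ if τ i < X i ω then W i ω else X i ω)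
    (S : Finset (Fin n))
    (hbulk : Integrable (fun ω => f (mask S fun i => if τ i < X i ω then 0 else X i ω)) μ)
    (hW : ∀ i ∈ S, IntegrableOn (fun ω => f (Pi.single i (W i ω))) {ω | τ i < X i ω} μ) :
    Integrable (fun ω => f (mask S fun i => Z i ω)) μ :=
  integrable_of_le_of_le
    (hf_meas.comp ((measurable_mask S).comp (measurable_pi_lambda _ hZ_meas))).aestronglyMeasurable
    (ae_of_all _ fun ω => hf_nonneg _ (mask_nonneg S (hZ0 · ω)))
    (ae_of_all _ (apply_mask_le_add_sum_indicator hf0 hf_mono hf_subadd hX0 hW0 hZ0 hZ S))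
    (integrable_zero _ _ _)
    (hbulk.add (integrable_finsetSum S fun i hi =>
      (integrable_indicator_iff (measurableSet_lt measurable_const (hX i))).2 (hW i hi)))

theorem integral_apply_mask_mono (hf_nonneg : ∀ x : Fin n → ℝ, 0 ≤ x → 0 ≤ f x)
    (hf_mono : ∀ x y : Fin n → ℝ, 0 ≤ x → x ≤ y → f x ≤ f y) (S : Finset (Fin n))
    {Z₁ Z₂ : Fin n → Ω → ℝ} (h0 : ∀ i ω, 0 ≤ Z₁ i ω) (hle : ∀ i ω, Z₁ i ω ≤ Z₂ i ω)
    (hint : Integrable (fun ω => f (mask S fun i => Z₂ i ω)) μ) :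
    ∫ ω, f (mask S fun i => Z₁ i ω) ∂μ ≤ ∫ ω, f (mask S fun i => Z₂ i ω) ∂μ :=
  integral_mono_of_nonneg (ae_of_all _ fun ω => hf_nonneg _ (mask_nonneg S (h0 · ω))) hint
    (ae_of_all _ fun ω => hf_mono _ _ (mask_nonneg S (h0 · ω)) (mask_mono S (hle · ω)))

theorem integral_apply_mask_le_add_sum_setIntegral (hf0 : f 0 = 0)
    (hf_nonneg : ∀ x : Fin n → ℝ, 0 ≤ x → 0 ≤ f x)
    (hf_mono : ∀ x y : Fin n → ℝ, 0 ≤ x → x ≤ y → f x ≤ f y)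
    (hf_subadd : ∀ x y : Fin n → ℝ, 0 ≤ x → 0 ≤ y → f (x + y) ≤ f x + f y)
    {X W Z : Fin n → Ω → ℝ} (hX : ∀ i, Measurable (X i)) (hX0 : ∀ i ω, 0 ≤ X i ω)
    (hW0 : ∀ i ω, 0 ≤ W i ω) (hZ0 : ∀ i ω, 0 ≤ Z i ω) {τ : Fin n → ℝ}
    (hZ : ∀ i ω, Z i ω ≤ if τ i < X i ω then W i ω else X i ω) (S : Finset (Fin n))
    (hbulk : Integrable (fun ω => f (mask S fun i => if τ i < X i ω then 0 else X i ω)) μ)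
    (hW : ∀ i ∈ S, IntegrableOn (fun ω => f (Pi.single i (W i ω))) {ω | τ i < X i ω} μ) :
    ∫ ω, f (mask S fun i => Z i ω) ∂μ
      ≤ bulkPart μ f X τ S + ∑ i ∈ S, ∫ ω in {ω | τ i < X i ω}, f (Pi.single i (W i ω)) ∂μ := by
  have hE : ∀ i, MeasurableSet {ω | τ i < X i ω} :=
    fun i => measurableSet_lt measurable_const (hX i)
  have htail : ∀ i ∈ S, Integrable
      ({ω | τ i < X i ω}.indicator fun ω => f (Pi.single i (W i ω))) μ :=
    fun i hi => (integrable_indicator_iff (hE i)).2 (hW i hi)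
  calc _ ≤ ∫ ω, (f (mask S fun i => if τ i < X i ω then 0 else X i ω)
        + ∑ i ∈ S, {ω | τ i < X i ω}.indicator (fun ω => f (Pi.single i (W i ω))) ω) ∂μ :=
        integral_mono_of_nonneg (ae_of_all _ fun ω => hf_nonneg _ (mask_nonneg S (hZ0 · ω)))
          (hbulk.add (integrable_finsetSum S htail))
          (ae_of_all _ (apply_mask_le_add_sum_indicator hf0 hf_mono hf_subadd hX0 hW0 hZ0 hZ S))
    _ = _ := by
        rw [integral_add hbulk (integrable_finsetSum S htail), integral_finsetSum S htail]
        simp only [integral_indicator (hE _)]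
        rfl

theorem integral_apply_mask_le_add_rpow_mul [IsProbabilityMeasure μ]
    (hf_nonneg : ∀ x : Fin n → ℝ, 0 ≤ x → 0 ≤ f x)
    (hf_mono : ∀ x y : Fin n → ℝ, 0 ≤ x → x ≤ y → f x ≤ f y)
    (hf_subadd : ∀ x y : Fin n → ℝ, 0 ≤ x → 0 ≤ y → f (x + y) ≤ f x + f y) {d : ℝ}
    (hf_hom : ∀ (x : Fin n → ℝ) (θ : ℝ), 0 ≤ x → θ ∈ Icc (0 : ℝ) 1 → f (θ • x) ≤ θ ^ d * f x)
    {Z₁ Z₂ : Fin n → Ω → ℝ} (hZ₁ : ∀ i ω, 0 ≤ Z₁ i ω) (hZ₂ : ∀ i ω, 0 ≤ Z₂ i ω)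
    {τ : Fin n → ℝ} (hτ : 0 ≤ τ) {a : ℝ} (ha : a ∈ Icc (0 : ℝ) 1)
    (hZ : ∀ i ω, Z₁ i ω ≤ Z₂ i ω + a * τ i) (S : Finset (Fin n))
    (hint : Integrable (fun ω => f (mask S fun i => Z₂ i ω)) μ) :
    ∫ ω, f (mask S fun i => Z₁ i ω) ∂μ
      ≤ ∫ ω, f (mask S fun i => Z₂ i ω) ∂μ + a ^ d * f (mask S τ) := by
  have hpt : ∀ ω, f (mask S fun i => Z₁ i ω)
      ≤ f (mask S fun i => Z₂ i ω) + a ^ d * f (mask S τ) :=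
    fun ω => apply_le_add_rpow_mul hf_mono hf_subadd hf_hom (mask_nonneg S (hZ₁ · ω))
      (mask_nonneg S (hZ₂ · ω)) (mask_nonneg S hτ) ha fun i => by
        simp only [mask, Pi.add_apply, Pi.smul_apply, smul_eq_mul]
        split_ifs
        exacts [hZ i ω, by simp]
  calc _ ≤ ∫ ω, (f (mask S fun i => Z₂ i ω) + a ^ d * f (mask S τ)) ∂μ :=
        integral_mono_of_nonneg (ae_of_all _ fun ω => hf_nonneg _ (mask_nonneg S (hZ₁ · ω)))
          (hint.add (integrable_const _)) (ae_of_all _ hpt)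
    _ = _ := by
        rw [integral_add hint (integrable_const _), integral_const, probReal_univ, one_smul]

theorem mul_integral_apply_mask_le {η : ℝ}
    (hf_mono : ∀ x y : Fin n → ℝ, 0 ≤ x → x ≤ y → f x ≤ f y)
    (hf_hom : ∀ (x : Fin n → ℝ) (θ : ℝ), 0 ≤ x → θ ∈ Icc (0 : ℝ) 1 →
      1 / η * θ * f x ≤ f (θ • x))
    {Z Y : Fin n → Ω → ℝ} (hZ0 : ∀ i ω, 0 ≤ Z i ω) {θ : ℝ} (hθ : θ ∈ Icc (0 : ℝ) 1)
    (hY : ∀ i ω, θ * Z i ω ≤ Y i ω) (S : Finset (Fin n))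
    (hZ : Integrable (fun ω => f (mask S fun i => Z i ω)) μ)
    (hY_int : Integrable (fun ω => f (mask S fun i => Y i ω)) μ) :
    1 / η * θ * ∫ ω, f (mask S fun i => Z i ω) ∂μ ≤ ∫ ω, f (mask S fun i => Y i ω) ∂μ := by
  rw [← integral_const_mul]
  refine integral_mono (hZ.const_mul _) hY_int fun ω =>
    (hf_hom _ θ (mask_nonneg S (hZ0 · ω)) hθ).trans
      (hf_mono _ _ (smul_nonneg hθ.1 (mask_nonneg S (hZ0 · ω))) fun i => ?_)
  simp only [mask, Pi.smul_apply, smul_eq_mul]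
  split_ifs
  exacts [hY i ω, by simp]

theorem integral_apply_mask_bulk_tail_bounds (hf_meas : Measurable f) (hf0 : f 0 = 0)
    (hf_nonneg : ∀ x : Fin n → ℝ, 0 ≤ x → 0 ≤ f x)
    (hf_mono : ∀ x y : Fin n → ℝ, 0 ≤ x → x ≤ y → f x ≤ f y)
    (hf_subadd : ∀ x y : Fin n → ℝ, 0 ≤ x → 0 ≤ y → f (x + y) ≤ f x + f y)
    {X : Fin n → Ω → ℝ} (hX : ∀ i, Measurable (X i)) (hX0 : ∀ i ω, 0 ≤ X i ω)
    (hind : iIndepFun X μ) (hint : ∀ i, Integrable (fun ω => f (Pi.single i (X i ω))) μ)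
    {τ : Fin n → ℝ} {r : ℝ} (hr0 : 0 ≤ r) (hr1 : r ≤ 1)
    (hp : ∀ j, r ≤ μ.real {ω | X j ω ≤ τ j}) {S : Finset (Fin n)} {k : ℕ} (hS : S.card ≤ k)
    (hu : Integrable (fun ω => f (mask S fun i => X i ω)) μ) :
    bulkPart μ f X τ S ≤ ∫ ω, f (mask S fun i => X i ω) ∂μ
      ∧ r ^ (k - 1) * tailPart μ f X τ S ≤ ∫ ω, f (mask S fun i => X i ω) ∂μ
      ∧ ∫ ω, f (mask S fun i => X i ω) ∂μ ≤ bulkPart μ f X τ S + tailPart μ f X τ S := by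
  refine ⟨integral_apply_mask_mono hf_nonneg hf_mono S
    (fun i ω => by split_ifs; exacts [le_rfl, hX0 i ω])
    (fun i ω => by split_ifs; exacts [hX0 i ω, le_rfl]) hu, ?_, ?_⟩
  · exact pow_mul_sum_setIntegral_le_integral (g := fun i x => f (Pi.single i x)) hX hind τ hS
      hr0 hr1 (fun j _ => hp j) (fun i => hf_meas.comp (measurable_update 0))
      (fun i _ ω _ => hf_nonneg _ (Pi.single_nonneg.2 (hX0 i ω)))
      (fun i _ => (hint i).integrableOn) hu (fun ω => hf_nonneg _ (mask_nonneg S (hX0 · ω)))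
      fun i hi ω _ => hf_mono _ _ (Pi.single_nonneg.2 (hX0 i ω)) (single_le_mask hi (hX0 · ω))
  · exact integral_apply_mask_le_add_sum_setIntegral hf0 hf_nonneg hf_mono hf_subadd hX hX0 hX0
      hX0 (fun i ω => by simp) S
      (integrable_bulkPart_integrand hf_meas hf_nonneg hf_mono hX hX0 τ S hu)
      fun i _ => (hint i).integrableOn

theorem bulk_tail_bounds_of_cutoff [IsProbabilityMeasure μ] (hf_meas : Measurable f)
    (hf0 : f 0 = 0) (hf_nonneg : ∀ x : Fin n → ℝ, 0 ≤ x → 0 ≤ f x)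
    (hf_mono : ∀ x y : Fin n → ℝ, 0 ≤ x → x ≤ y → f x ≤ f y)
    (hf_subadd : ∀ x y : Fin n → ℝ, 0 ≤ x → 0 ≤ y → f (x + y) ≤ f x + f y) {d η : ℝ}
    (hf_hom : ∀ (x : Fin n → ℝ) (θ : ℝ), 0 ≤ x → θ ∈ Icc (0 : ℝ) 1 →
      (1 / η) * θ * f x ≤ f (θ • x) ∧ f (θ • x) ≤ θ ^ d * f x)
    {X : Fin n → Ω → ℝ} (hX : ∀ i, Measurable (X i)) (hX0 : ∀ i ω, 0 ≤ X i ω)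
    (hind : iIndepFun X μ) (hint : ∀ i, Integrable (fun ω => f (Pi.single i (X i ω))) μ)
    {τ : Fin n → ℝ} (hτ : 0 ≤ τ) {ε δ a : ℝ} (hε0 : 0 ≤ ε) (hε1 : ε ≤ 1) (hδ : 0 < δ)
    (ha : a ∈ Icc (0 : ℝ) 1) (had : a ^ d = ε * δ)
    (hp : ∀ j, 1 - ε ≤ μ.real {ω | X j ω ≤ τ j}) (hq : ∀ i, δ ≤ μ.real {ω | τ i < X i ω})
    {cst : Fin n → ℝ} (hcst0 : ∀ i, 0 ≤ cst i)
    (hcstH : ∀ i, f (Pi.single i (cst i))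
      = (∫ ω in {ω | τ i < X i ω}, f (Pi.single i (X i ω)) ∂μ) / μ.real {ω | τ i < X i ω})
    {Z Y : Fin n → Ω → ℝ} (hZ_meas : ∀ i, Measurable (Z i)) (hZ0 : ∀ i ω, 0 ≤ Z i ω)
    (hZ_le : ∀ i ω, Z i ω ≤ if τ i < X i ω then cst i else X i ω)
    (hZ_add : ∀ i ω, (if τ i < X i ω then 0 else X i ω) ≤ Z i ω + a * τ i)
    (hZ_cst : ∀ i ω, τ i < X i ω → Z i ω = cst i)
    (hY : ∀ i ω, (1 - ε) * Z i ω ≤ Y i ω ∧ Y i ω ≤ Z i ω) {S : Finset (Fin n)} {k : ℕ}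
    (hS : S.card ≤ k) (hu : Integrable (fun ω => f (mask S fun i => X i ω)) μ)
    (hv : Integrable (fun ω => f (mask S fun i => Y i ω)) μ) :
    ∫ ω, f (mask S fun i => Y i ω) ∂μ ≤ bulkPart μ f X τ S + tailPart μ f X τ S
      ∧ bulkPart μ f X τ S ≤ ∫ ω, f (mask S fun i => Z i ω) ∂μ + ε * tailPart μ f X τ S
      ∧ (1 - ε) ^ (k - 1) * tailPart μ f X τ S ≤ ∫ ω, f (mask S fun i => Z i ω) ∂μ
      ∧ 1 / η * (1 - ε) * ∫ ω, f (mask S fun i => Z i ω) ∂μ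
        ≤ ∫ ω, f (mask S fun i => Y i ω) ∂μ := by
  have hY0 : ∀ i ω, 0 ≤ Y i ω := fun i ω =>
    (mul_nonneg (by linarith) (hZ0 i ω)).trans (hY i ω).1
  have hbulk := integrable_bulkPart_integrand hf_meas hf_nonneg hf_mono hX hX0 τ S hu
  have hcst_int : ∀ i ∈ S,
      IntegrableOn (fun _ => f (Pi.single i (cst i))) {ω | τ i < X i ω} μ :=
    fun i _ => integrableOn_const (measure_ne_top _ _)
  have hcst_tail := sum_setIntegral_eq_tailPart (S := S)
    (fun i _ => (hδ.trans_le (hq i)).ne') fun i _ => hcstH i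
  have hZ_int := integrable_apply_mask_of_le_ite (W := fun i _ => cst i) hf_meas hf0 hf_nonneg
    hf_mono hf_subadd hX hX0 (fun i _ => hcst0 i) hZ_meas hZ0 hZ_le S hbulk hcst_int
  refine ⟨?_, ?_, ?_, ?_⟩
  · rw [← hcst_tail]
    exact integral_apply_mask_le_add_sum_setIntegral (W := fun i _ => cst i) hf0 hf_nonneg
      hf_mono hf_subadd hX hX0 (fun i _ => hcst0 i) hY0 (fun i ω => (hY i ω).2.trans (hZ_le i ω))
      S hbulk hcst_int
  · have hτ_tail := apply_mask_le_tailPart_div hf0 hf_nonneg hf_mono hf_subadd hX hX0 hint hτ hδ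
      hq S
    calc bulkPart μ f X τ S ≤ ∫ ω, f (mask S fun i => Z i ω) ∂μ + a ^ d * f (mask S τ) :=
          integral_apply_mask_le_add_rpow_mul hf_nonneg hf_mono hf_subadd
            (fun x θ hx hθ => (hf_hom x θ hx hθ).2)
            (fun i ω => by split_ifs; exacts [le_rfl, hX0 i ω]) hZ0 hτ ha hZ_add S hZ_int
      _ ≤ ∫ ω, f (mask S fun i => Z i ω) ∂μ + ε * δ * (tailPart μ f X τ S / δ) := by
          rw [had]
          gcongr
      _ = _ := by field_simp
  · rw [← hcst_tail]
    exact pow_mul_sum_setIntegral_le_integral (g := fun i _ => f (Pi.single i (cst i))) hX hind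
      τ hS (by linarith) (by linarith) (fun j _ => hp j) (fun i => measurable_const)
      (fun i _ ω _ => hf_nonneg _ (Pi.single_nonneg.2 (hcst0 i))) hcst_int hZ_int
      (fun ω => hf_nonneg _ (mask_nonneg S (hZ0 · ω))) fun i hi ω hω => by
        rw [← hZ_cst i ω hω]
        exact hf_mono _ _ (Pi.single_nonneg.2 (hZ0 i ω)) (single_le_mask hi (hZ0 · ω))
  · exact mul_integral_apply_mask_le hf_mono (fun x θ hx hθ => (hf_hom x θ hx hθ).1) hZ0
      ⟨by linarith, by linarith⟩ (fun i ω => (hY i ω).1) S hZ_int hv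

end Truncation

theorem exp_neg_div_one_sub_le_one_sub_div_pow {c : ℝ} (hc0 : 0 ≤ c) (hc1 : c < 1) {k : ℕ}
    (hk : 1 ≤ k) : Real.exp (-(c / (1 - c))) ≤ (1 - c / k) ^ k := by
  have hk1 : (1 : ℝ) ≤ k := by exact_mod_cast hk
  have hck : c / k ≤ c := div_le_self hc0 hk1
  have hpos : 0 < 1 - c / k := by linarith
  -- `log x ≥ 1 - x⁻¹` at `x = 1 - c/k`, multiplied by `k`
  have hlog : -(c / (1 - c)) ≤ k * Real.log (1 - c / k) := by
    have hkc : (k : ℝ) - c ≠ 0 := by linarith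
    have h : k * (1 - (1 - c / k)⁻¹) = -(c / (1 - c / k)) := by field_simp; ring
    calc -(c / (1 - c)) ≤ -(c / (1 - c / k)) :=
          neg_le_neg (div_le_div_of_nonneg_left hc0 (by linarith) (by linarith))
      _ = k * (1 - (1 - c / k)⁻¹) := h.symm
      _ ≤ k * Real.log (1 - c / k) :=
          mul_le_mul_of_nonneg_left (Real.one_sub_inv_le_log_of_pos hpos) (by linarith)
  rw [← Real.exp_log (pow_pos hpos k), Real.log_pow]
  exact Real.exp_le_exp.2 hlog

theorem half_mul_le_of_le_add {u v A T β ψ : ℝ} (hA0 : 0 ≤ A) (hT0 : 0 ≤ T) (hψ0 : 0 ≤ ψ)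
    (hψβ : ψ ≤ β) (hβ1 : β ≤ 1) (hAu : A ≤ u) (hTu : β * T ≤ u) (hv : v ≤ A + T) :
    1 / 2 * ψ * v ≤ u := by
  nlinarith [mul_le_mul_of_nonneg_left hv hψ0,
    mul_le_mul_of_nonneg_right hψβ (add_nonneg hA0 hT0), mul_le_of_le_one_left hA0 hβ1]

theorem le_div_mul_of_le_add {u v A T E β ε c η ψ : ℝ} (hu0 : 0 ≤ u) (hE0 : 0 ≤ E)
    (hβ0 : 0 ≤ β) (hβ1 : β ≤ 1) (hε0 : 0 ≤ ε) (hε1 : ε ≤ 1) (hεc : ε ≤ c) (hη : 0 < η)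
    (hψ : 0 < ψ) (hψβ : ψ ≤ (1 - ε) * β) (hu : u ≤ A + T) (hA : A ≤ E + ε * T)
    (hT : β * T ≤ E) (hv : 1 / η * (1 - ε) * E ≤ v) :
    u ≤ 2 * η * (1 + c) / ψ * v := by
  have hβAT : β * (A + T) ≤ (2 + c) * E := by
    nlinarith [mul_le_mul_of_nonneg_left hA hβ0,
      mul_le_mul_of_nonneg_left hT (by linarith : 0 ≤ 1 + ε)]
  have hEv : (1 - ε) * E ≤ η * v := by
    rw [mul_assoc, div_mul_eq_mul_div, one_mul, div_le_iff₀ hη] at hv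
    linarith
  rw [div_mul_eq_mul_div, le_div_iff₀ hψ]
  calc u * ψ ≤ u * ((1 - ε) * β) := mul_le_mul_of_nonneg_left hψβ hu0
    _ ≤ (1 - ε) * (β * (A + T)) := by nlinarith [mul_le_mul_of_nonneg_left hu hβ0]
    _ ≤ (1 - ε) * ((2 + c) * E) := mul_le_mul_of_nonneg_left hβAT (by linarith)
    _ ≤ (2 + 2 * c) * ((1 - ε) * E) := by nlinarith [mul_nonneg (by linarith : 0 ≤ 1 - ε) hE0]
    _ ≤ (2 + 2 * c) * (η * v) := mul_le_mul_of_nonneg_left hEv (by linarith)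
    _ = 2 * η * (1 + c) * v := by ring

theorem constant_factor_of_bulk_tail_bounds {u v A T E Δ c ε η : ℝ} {k : ℕ} (hk : 1 ≤ k)
    (hΔ : 0 ≤ Δ) (hc : c ∈ Ioo (Δ * k) 1) (hεdef : ε = c / k) (hη : 0 < η) (hA0 : 0 ≤ A)
    (hT0 : 0 ≤ T) (hAu : A ≤ u) (hTu : (1 - ε) ^ (k - 1) * T ≤ u) (huAT : u ≤ A + T)
    (hvAT : v ≤ A + T) (hAE : A ≤ E + ε * T) (hTE : (1 - ε) ^ (k - 1) * T ≤ E)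
    (hEv : 1 / η * (1 - ε) * E ≤ v) :
    1 / 2 * (Real.exp (-(c / (1 - c))) * (1 - Δ * k / c)) * v ≤ u ∧
      u ≤ 2 * η * (1 + c) / (Real.exp (-(c / (1 - c))) * (1 - Δ * k / c)) * v := by
  obtain ⟨hcΔk, hc1⟩ := hc
  have hc0 : 0 < c := (mul_nonneg hΔ k.cast_nonneg).trans_lt hcΔk
  have hεc : ε ≤ c := hεdef ▸ div_le_self hc0.le (by exact_mod_cast hk)
  have hε0 : 0 ≤ ε := hεdef ▸ div_nonneg hc0.le k.cast_nonneg
  have hψ0 : 0 < Real.exp (-(c / (1 - c))) * (1 - Δ * k / c) :=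
    mul_pos (Real.exp_pos _) (sub_pos.2 ((div_lt_one hc0).2 hcΔk))
  have hψ : Real.exp (-(c / (1 - c))) * (1 - Δ * k / c) ≤ (1 - ε) * (1 - ε) ^ (k - 1) :=
    calc _ ≤ Real.exp (-(c / (1 - c))) :=
          mul_le_of_le_one_right (Real.exp_pos _).le (sub_le_self 1 (by positivity))
      _ ≤ (1 - c / k) ^ k := exp_neg_div_one_sub_le_one_sub_div_pow hc0.le hc1 hk
      _ = _ := by rw [← hεdef, ← pow_succ', Nat.sub_add_cancel hk]
  have hβ0 : 0 ≤ (1 - ε) ^ (k - 1) := pow_nonneg (by linarith) _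
  have hβ1 : (1 - ε) ^ (k - 1) ≤ 1 := pow_le_one₀ (by linarith) (by linarith)
  exact ⟨half_mul_le_of_le_add hA0 hT0 hψ0.le
      (hψ.trans (mul_le_of_le_one_left hβ0 (by linarith))) hβ1 hAu hTu hvAT,
    le_div_mul_of_le_add (hA0.trans hAu) ((mul_nonneg hβ0 hT0).trans hTE) hβ0 hβ1 hε0
      (by linarith) hεc hη hψ0 hψ huAT hAE hTE hEv⟩

theorem sketch_constant_factor_approx_general
    {Ωs : Type*} [MeasurableSpace Ωs] (μ : Measure Ωs) [IsProbabilityMeasure μ]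
    {n : ℕ}
    (X : Fin n → Ωs → ℝ)
    (hX_meas : ∀ i, Measurable (X i))
    (hX_nonneg : ∀ i ω, 0 ≤ X i ω)
    (hX_indep : iIndepFun X μ)
    (f : (Fin n → ℝ) → ℝ)
    (hf_meas : Measurable f)
    (hf_nonneg : ∀ x : Fin n → ℝ, 0 ≤ x → 0 ≤ f x)
    (hf_mono : ∀ x y : Fin n → ℝ, 0 ≤ x → x ≤ y → f x ≤ f y)
    (hf_subadd : ∀ x y : Fin n → ℝ, 0 ≤ x → 0 ≤ y → f (x + y) ≤ f x + f y)
    (d η : ℝ) (hd : d ∈ Set.Ioc (0 : ℝ) 1) (hη : 1 ≤ η)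
    (hf_hom : ∀ (x : Fin n → ℝ) (θ : ℝ), 0 ≤ x → θ ∈ Set.Icc (0 : ℝ) 1 →
      (1 / η) * θ * f x ≤ f (θ • x) ∧ f (θ • x) ≤ θ ^ d * f x)
    (k : ℕ) (hk : 1 ≤ k)
    (Δ : ℝ) (hΔ : 0 ≤ Δ)
    (c : ℝ) (hc : c ∈ Set.Ioo (Δ * k) 1)
    (ε : ℝ) (hεdef : ε = c / k) (hε : ε ∈ Set.Ioo Δ 1)
    (a : ℝ) (hadef : a = (ε * (ε - Δ)) ^ (1 / d))
    (τ : Fin n → ℝ) (hτ : ∀ i, 0 ≤ τ i)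
    (hquant : ∀ i, 1 - ε ≤ (μ {ω | X i ω ≤ τ i}).toReal ∧
      (μ {ω | X i ω ≤ τ i}).toReal ≤ 1 - ε + Δ)
    (H : Fin n → ℝ)
    (hH : ∀ i, H i = (∫ ω in {ω | τ i < X i ω}, f (Pi.single i (X i ω)) ∂μ) /
      (μ {ω | τ i < X i ω}).toReal)
    (hH_int : ∀ i, Integrable (fun ω => f (Pi.single i (X i ω))) μ)
    (cst : Fin n → ℝ) (hcst : ∀ i, τ i < cst i)
    (hcstH : ∀ i, f (Pi.single i (cst i)) = H i)
    (Xhat : Fin n → Ωs → ℝ)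
    (hXhat : ∀ i ω, Xhat i ω = if X i ω ≤ τ i then X i ω else cst i)
    (Xtil : Fin n → Ωs → ℝ)
    (hXtil : ∀ i ω, Xtil i ω = if a * τ i < Xhat i ω then Xhat i ω else 0)
    (Y : Fin n → Ωs → ℝ)
    (hY : ∀ i ω, (1 - ε) * Xtil i ω ≤ Y i ω ∧ Y i ω ≤ Xtil i ω)
    (u v : Finset (Fin n) → ℝ)
    (hu : ∀ S, u S = ∫ ω, f (mask S (fun i => X i ω)) ∂μ)
    (hv : ∀ S, v S = ∫ ω, f (mask S (fun i => Y i ω)) ∂μ)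
    (hu_int : ∀ S : Finset (Fin n),
      Integrable (fun ω => f (mask S (fun i => X i ω))) μ)
    (hv_int : ∀ S : Finset (Fin n),
      Integrable (fun ω => f (mask S (fun i => Y i ω))) μ) :
    ∀ S : Finset (Fin n), S.card ≤ k →
      (1 / 2) * (Real.exp (-(c / (1 - c))) * (1 - Δ * k / c)) * v S ≤ u S ∧
      u S ≤ 2 * η * (1 + c) / (Real.exp (-(c / (1 - c))) * (1 - Δ * k / c)) * v S := by
  intro S hS
  have hε0 : 0 < ε := hΔ.trans_lt hε.1
  have hf0 : f 0 = 0 := le_antisymm (by simpa [Real.zero_rpow hd.1.ne'] using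
    (hf_hom 0 0 le_rfl ⟨le_rfl, zero_le_one⟩).2) (hf_nonneg 0 le_rfl)
  simp only [← measureReal_def] at hquant hH
  have hq : ∀ i, ε - Δ ≤ μ.real {ω | τ i < X i ω} := fun i =>
    le_measureReal_lt_of_measureReal_le (hX_meas i) (by linarith [(hquant i).2])
  have hεΔ : 0 ≤ ε * (ε - Δ) := mul_nonneg hε0.le (by linarith [hε.1])
  have ha : a ∈ Set.Icc (0 : ℝ) 1 := hadef ▸ ⟨Real.rpow_nonneg hεΔ _,
    Real.rpow_le_one hεΔ (by nlinarith [hε.2]) (one_div_pos.2 hd.1).le⟩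
  have had : a ^ d = ε * (ε - Δ) := by rw [hadef, one_div, Real.rpow_inv_rpow hεΔ hd.1.ne']
  have hcut := fun i ω => cutoff_bounds (hX_nonneg i ω) (hτ i) (hcst i) ha (hXhat i ω) (hXtil i ω)
  obtain ⟨hAu, hTu, huAT⟩ := integral_apply_mask_bulk_tail_bounds hf_meas hf0 hf_nonneg hf_mono
    hf_subadd hX_meas hX_nonneg hX_indep hH_int (by linarith [hε.2]) (by linarith)
    (fun j => (hquant j).1) hS (hu_int S)
  obtain ⟨hvAT, hAE, hTE, hEv⟩ := bulk_tail_bounds_of_cutoff hf_meas hf0 hf_nonneg hf_mono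
    hf_subadd hf_hom hX_meas hX_nonneg hX_indep hH_int hτ hε0.le hε.2.le (by linarith [hε.1]) ha
    had (fun j => (hquant j).1) hq (fun i => (hτ i).trans (hcst i).le)
    (fun i => (hcstH i).trans (hH i))
    (fun i => measurable_cutoff (hX_meas i) (hXhat i) (hXtil i)) (fun i ω => (hcut i ω).1)
    (fun i ω => (hcut i ω).2.1) (fun i ω => (hcut i ω).2.2.1) (fun i ω => (hcut i ω).2.2.2)
    hY hS (hu_int S) (hv_int S)
  rw [← hu S] at hAu hTu huAT
  rw [← hv S] at hvAT hEv
  exact constant_factor_of_bulk_tail_bounds hk hΔ hc hεdef (by linarith)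
    (bulkPart_nonneg hf_nonneg hX_nonneg τ S) (tailPart_nonneg hf_nonneg hX_meas hX_nonneg τ S)
    hAu hTu huAT hvAT hAE hTE hEv

/-- Corollary 1: under the setup of Theorem 1 with `Δ·k < 1`, `c ∈ (Δ·k, 1)`,
`ε = c/k` and `a = (ε(ε−Δ))^{1/d}`, setting `ψ(c,δ) = e^{−c/(1−c)}(1−δ)`, for every
`S` with `|S| ≤ k`:
`(1/2)·ψ(c, Δk/c)·v(S) ≤ u(S) ≤ 2η(1+c)/ψ(c, Δk/c)·v(S)`. -/
theorem sketch_constant_factor_approx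
    {Ωs : Type*} [MeasurableSpace Ωs] (μ : Measure Ωs) [IsProbabilityMeasure μ]
    {n : ℕ} (hn : 1 ≤ n)
    (X : Fin n → Ωs → ℝ)
    (hX_meas : ∀ i, Measurable (X i))
    (hX_nonneg : ∀ i ω, 0 ≤ X i ω)
    (hX_indep : iIndepFun X μ)
    (f : (Fin n → ℝ) → ℝ)
    (hf_meas : Measurable f)
    (hf_nonneg : ∀ x : Fin n → ℝ, 0 ≤ x → 0 ≤ f x)
    (hf_mono : ∀ x y : Fin n → ℝ, 0 ≤ x → x ≤ y → f x ≤ f y)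
    (hf_subadd : ∀ x y : Fin n → ℝ, 0 ≤ x → 0 ≤ y → f (x + y) ≤ f x + f y)
    (d η : ℝ) (hd : d ∈ Set.Ioc (0 : ℝ) 1) (hη : 1 ≤ η)
    (hf_hom : ∀ (x : Fin n → ℝ) (θ : ℝ), 0 ≤ x → θ ∈ Set.Icc (0 : ℝ) 1 →
      (1 / η) * θ * f x ≤ f (θ • x) ∧ f (θ • x) ≤ θ ^ d * f x)
    (k : ℕ) (hk : 1 ≤ k)
    (Δ : ℝ) (hΔ : 0 ≤ Δ) (hΔk : Δ * k < 1)
    (c : ℝ) (hc : c ∈ Set.Ioo (Δ * k) 1)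
    (ε : ℝ) (hεdef : ε = c / k) (hε : ε ∈ Set.Ioo Δ 1)
    (a : ℝ) (hadef : a = (ε * (ε - Δ)) ^ (1 / d))
    (τ : Fin n → ℝ) (hτ : ∀ i, 0 ≤ τ i)
    (hquant : ∀ i, 1 - ε ≤ (μ {ω | X i ω ≤ τ i}).toReal ∧
      (μ {ω | X i ω ≤ τ i}).toReal ≤ 1 - ε + Δ)
    (H : Fin n → ℝ)
    (hH : ∀ i, H i = (∫ ω in {ω | τ i < X i ω}, f (Pi.single i (X i ω)) ∂μ) /
      (μ {ω | τ i < X i ω}).toReal)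
    (hH_int : ∀ i, Integrable (fun ω => f (Pi.single i (X i ω))) μ)
    (cst : Fin n → ℝ) (hcst : ∀ i, τ i < cst i)
    (hcstH : ∀ i, f (Pi.single i (cst i)) = H i)
    (Xhat : Fin n → Ωs → ℝ)
    (hXhat : ∀ i ω, Xhat i ω = if X i ω ≤ τ i then X i ω else cst i)
    (Xtil : Fin n → Ωs → ℝ)
    (hXtil : ∀ i ω, Xtil i ω = if a * τ i < Xhat i ω then Xhat i ω else 0)
    (Y : Fin n → Ωs → ℝ)
    (hY : ∀ i ω, (1 - ε) * Xtil i ω ≤ Y i ω ∧ Y i ω ≤ Xtil i ω)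
    (u v : Finset (Fin n) → ℝ)
    (hu : ∀ S, u S = ∫ ω, f (mask S (fun i => X i ω)) ∂μ)
    (hv : ∀ S, v S = ∫ ω, f (mask S (fun i => Y i ω)) ∂μ)
    (hu_int : ∀ S : Finset (Fin n),
      Integrable (fun ω => f (mask S (fun i => X i ω))) μ)
    (hv_int : ∀ S : Finset (Fin n),
      Integrable (fun ω => f (mask S (fun i => Y i ω))) μ) :
    ∀ S : Finset (Fin n), S.card ≤ k →
      (1 / 2) * (Real.exp (-(c / (1 - c))) * (1 - Δ * k / c)) * v S ≤ u S ∧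
      u S ≤ 2 * η * (1 + c) / (Real.exp (-(c / (1 - c))) * (1 - Δ * k / c)) * v S :=
  sketch_constant_factor_approx_general μ X hX_meas hX_nonneg hX_indep f hf_meas hf_nonneg hf_mono
    hf_subadd d η hd hη hf_hom k hk Δ hΔ c hc ε hεdef hε a hadef τ hτ hquant H hH hH_int cst hcst
    hcstH Xhat hXhat Xtil hXtil Y hY u v hu hv hu_int hv_int
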